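/- Let M = (Q,Σ,Δ,q0,R) be an mtt with Σ and Δ disjoint, and let π be a binary symbol not in Σ ∪ Δ. Then there exists an mtt M' with input alphabet Σ and output alphabet Σ ∪ Δ ∪ {π} such that τ_{OI,M'} = {(s, π(s,t)) | (s,t) ∈ τ_{OI,M}}. Consequently, for all s ∈ T_Σ and t ∈ T_Δ: (s,t) ∈ τ_{OI,M} if and only if π(s,t) ∈ range(τ_{OI,M'}). -/

import Mathlib

namespace MttF

/-- Finite ordered trees over a label type `α`. -/
inductive RTree (α : Type) : Type
  | node : α → List (RTree α) → RTree α

namespace RTree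

variable {α β : Type}

/-- The root label of a tree. -/
def label : RTree α → α
  | node a _ => a

/-- The list of immediate subtrees of a tree. -/
def children : RTree α → List (RTree α)
  | node _ ts => ts

/-- Relabelling of trees. -/
def map (f : α → β) : RTree α → RTree β
  | node a ts => node (f a) (ts.attach.map (fun x => map f x.1))
decreasing_by
  have := List.sizeOf_lt_of_mem x.2
  simp only [node.sizeOf_spec]
  omega

/-- A tree is well-formed with respect to a rank function if every node labeled
by a rank-`k` symbol has exactly `k` children. `T_Σ` is the set of well-formed
trees over `Σ`. -/
inductive Wf (rk : α → ℕ) : RTree α → Prop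
  | node {a : α} {ts : List (RTree α)} :
      ts.length = rk a → (∀ t ∈ ts, Wf rk t) → Wf rk (node a ts)

/-- `Subtree u t` holds iff `u` is a subtree of `t` (rooted at some node of `t`). -/
inductive Subtree : RTree α → RTree α → Prop
  | refl (t : RTree α) : Subtree t t
  | step {u c : RTree α} {a : α} {ts : List (RTree α)} :
      c ∈ ts → Subtree u c → Subtree u (node a ts)

end RTree

/-- Labels for output trees with parameters: trees over `Δ ∪ Y`. -/
inductive OLab (Δ : Type) : Type
  | out (d : Δ)
  | param (i : ℕ)

/-- Labels for right-hand sides of mtt rules: trees over `Δ ∪ (Q × X) ∪ Y`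
(the second component of a call is the index of the input variable `x`). -/
inductive RLab (Δ Q : Type) : Type
  | out (d : Δ)
  | call (q : Q) (x : ℕ)
  | param (i : ℕ)

/-- Labels for "semantic" trees over `Δ ∪ (Q × T_Σ) ∪ Y`. -/
inductive SLab (Γ Δ Q : Type) : Type
  | out (d : Δ)
  | call (q : Q) (s : RTree Γ)
  | param (i : ℕ)

/-- Trees over `Δ ∪ Y`. -/
abbrev OT (Δ : Type) := RTree (OLab Δ)
/-- Right-hand side trees over `Δ ∪ (Q × X) ∪ Y`. -/
abbrev Rhs (Δ Q : Type) := RTree (RLab Δ Q)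
/-- Trees over `Δ ∪ (Q × T_Σ) ∪ Y`. -/
abbrev ST (Γ Δ Q : Type) := RTree (SLab Γ Δ Q)

/-- First-order substitution `x_i := ss_i` on a label of a right-hand side
(indices are 0-based; for well-formed rules the index is always in range). -/
def RLab.subst {Γ Δ Q : Type} (ss : List (RTree Γ)) : RLab Δ Q → SLab Γ Δ Q
  | .out d => .out d
  | .param i => .param i
  | .call q x =>
    match ss[x]? with
    | some s => .call q s
    | none => .param x

/-- `r[x_1/s_1, …, x_k/s_k]`. -/
def substX {Γ Δ Q : Type} (ss : List (RTree Γ)) (r : Rhs Δ Q) : ST Γ Δ Q :=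
  r.map (RLab.subst ss)

/-- Second-order (parameter) substitution `t[y_1/ts_1, …, y_n/ts_n]`
(`y` indices are 0-based). -/
def substY {Δ : Type} (ts : List (OT Δ)) : OT Δ → OT Δ
  | .node (.param i) _ => ts.getD i (.node (.param i) [])
  | .node (.out d) us => .node (.out d) (us.attach.map (fun x => substY ts x.1))
decreasing_by
  have := List.sizeOf_lt_of_mem x.2
  simp only [RTree.node.sizeOf_spec]
  omega

/-- The embedding of `T_Δ` into the trees over `Δ ∪ Y`. -/
def embed {Δ : Type} (t : RTree Δ) : OT Δ := t.map OLab.out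

variable {Γ Δ Q : Type}

/-- IO (call-by-value, inside-out) semantics: `SemIO rsel u t` holds iff
`t ∈ ⟦u⟧_IO`.  The rules of the transducer are given by a selector
`rsel q σ ss`: the set of right-hand sides of the `⟨q,σ⟩`-rules that are
applicable when the children of the current input node are `ss` (for a plain
mtt this does not depend on `ss`, cf. `plainSel`). -/
inductive SemIO (rsel : Q → Γ → List (RTree Γ) → Set (Rhs Δ Q)) :
    ST Γ Δ Q → OT Δ → Prop
  | param (i : ℕ) :
      SemIO rsel (.node (.param i) []) (.node (.param i) [])
  | out {d : Δ} {us : List (ST Γ Δ Q)} {ts : List (OT Δ)}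
      (hlen : ts.length = us.length)
      (h : ∀ i : Fin us.length, SemIO rsel (us.get i) (ts.get (i.cast hlen.symm))) :
      SemIO rsel (.node (.out d) us) (.node (.out d) ts)
  | call {q : Q} {σ : Γ} {ss : List (RTree Γ)} {us : List (ST Γ Δ Q)}
      {r : Rhs Δ Q} {t₀ : OT Δ} {ts : List (OT Δ)}
      (hr : r ∈ rsel q σ ss)
      (h₀ : SemIO rsel (substX ss r) t₀)
      (hlen : ts.length = us.length)
      (h : ∀ i : Fin us.length, SemIO rsel (us.get i) (ts.get (i.cast hlen.symm))) :
      SemIO rsel (.node (.call q (.node σ ss)) us) (substY ts t₀)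

mutual
/-- OI (call-by-name, outside-in) semantics: `SemOI rsel u t` holds iff
`t ∈ ⟦u⟧_OI`. -/
inductive SemOI (rsel : Q → Γ → List (RTree Γ) → Set (Rhs Δ Q)) :
    ST Γ Δ Q → OT Δ → Prop
  | param (i : ℕ) :
      SemOI rsel (.node (.param i) []) (.node (.param i) [])
  | out {d : Δ} {us : List (ST Γ Δ Q)} {ts : List (OT Δ)}
      (hlen : ts.length = us.length)
      (h : ∀ i : Fin us.length, SemOI rsel (us.get i) (ts.get (i.cast hlen.symm))) :
      SemOI rsel (.node (.out d) us) (.node (.out d) ts)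
  | call {q : Q} {σ : Γ} {ss : List (RTree Γ)} {us : List (ST Γ Δ Q)}
      {r : Rhs Δ Q} {t₀ : OT Δ} {t : OT Δ}
      (hr : r ∈ rsel q σ ss)
      (h₀ : SemOI rsel (substX ss r) t₀)
      (hs : OISub rsel us t₀ t) :
      SemOI rsel (.node (.call q (.node σ ss)) us) t

/-- OI-substitution: `OISub rsel us t₀ t` holds iff `t ∈ (t₀ ←_OI (⟦us_1⟧_OI, …, ⟦us_n⟧_OI))`,
i.e. `t` is obtained from `t₀` by independently replacing every occurrence of a parameter
`y_i` by some member of `⟦us_i⟧_OI`. -/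
inductive OISub (rsel : Q → Γ → List (RTree Γ) → Set (Rhs Δ Q)) :
    List (ST Γ Δ Q) → OT Δ → OT Δ → Prop
  | param {us : List (ST Γ Δ Q)} {i : ℕ} {t : OT Δ}
      (h : i < us.length) (hsem : SemOI rsel (us.get ⟨i, h⟩) t) :
      OISub rsel us (.node (.param i) []) t
  | out {us : List (ST Γ Δ Q)} {d : Δ} {ts ts' : List (OT Δ)}
      (hlen : ts'.length = ts.length)
      (h : ∀ i : Fin ts.length, OISub rsel us (ts.get i) (ts'.get (i.cast hlen.symm))) :
      OISub rsel us (.node (.out d) ts) (.node (.out d) ts')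
end

/-- The rule selector of a plain mtt: the applicable rules do not depend on the
child subtrees of the current input node. -/
def plainSel (rules : Q → Γ → Set (Rhs Δ Q)) :
    Q → Γ → List (RTree Γ) → Set (Rhs Δ Q) :=
  fun q σ _ => rules q σ

/-- The translation `τ_{IO,M} ⊆ T_Σ × T_Δ` realized in IO mode. -/
def tauIO (rankΓ : Γ → ℕ) (rankΔ : Δ → ℕ)
    (rsel : Q → Γ → List (RTree Γ) → Set (Rhs Δ Q)) (q₀ : Q) :
    Set (RTree Γ × RTree Δ) :=
  {p | p.1.Wf rankΓ ∧ p.2.Wf rankΔ ∧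
       SemIO rsel (.node (.call q₀ p.1) []) (embed p.2)}

/-- The translation `τ_{OI,M} ⊆ T_Σ × T_Δ` realized in OI mode. -/
def tauOI (rankΓ : Γ → ℕ) (rankΔ : Δ → ℕ)
    (rsel : Q → Γ → List (RTree Γ) → Set (Rhs Δ Q)) (q₀ : Q) :
    Set (RTree Γ × RTree Δ) :=
  {p | p.1.Wf rankΓ ∧ p.2.Wf rankΔ ∧
       SemOI rsel (.node (.call q₀ p.1) []) (embed p.2)}

/-- Well-formedness of a right-hand side of a rule of an mtt whose current
input symbol has rank `k` and whose current state has rank `m`: output symbols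
have the correct number of children, state calls `⟨q', x_i⟩` have `rank q'`
children and `i < k`, and parameters `y_j` satisfy `j < m`. -/
inductive RhsWf (rankΔ : Δ → ℕ) (rankQ : Q → ℕ) (k m : ℕ) : Rhs Δ Q → Prop
  | out {d : Δ} {ts : List (Rhs Δ Q)}
      (hlen : ts.length = rankΔ d) (h : ∀ t ∈ ts, RhsWf rankΔ rankQ k m t) :
      RhsWf rankΔ rankQ k m (.node (.out d) ts)
  | call {q : Q} {x : ℕ} {ts : List (Rhs Δ Q)}
      (hx : x < k) (hlen : ts.length = rankQ q)
      (h : ∀ t ∈ ts, RhsWf rankΔ rankQ k m t) :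
      RhsWf rankΔ rankQ k m (.node (.call q x) ts)
  | param {i : ℕ} (hi : i < m) : RhsWf rankΔ rankQ k m (.node (.param i) [])

/-- Well-formedness of a tree over `Δ ∪ (Q × T_Σ) ∪ Y`. -/
inductive STWf (rankΓ : Γ → ℕ) (rankΔ : Δ → ℕ) (rankQ : Q → ℕ) : ST Γ Δ Q → Prop
  | out {d : Δ} {ts : List (ST Γ Δ Q)}
      (hlen : ts.length = rankΔ d) (h : ∀ t ∈ ts, STWf rankΓ rankΔ rankQ t) :
      STWf rankΓ rankΔ rankQ (.node (.out d) ts)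
  | call {q : Q} {s : RTree Γ} {ts : List (ST Γ Δ Q)}
      (hs : s.Wf rankΓ) (hlen : ts.length = rankQ q)
      (h : ∀ t ∈ ts, STWf rankΓ rankΔ rankQ t) :
      STWf rankΓ rankΔ rankQ (.node (.call q s) ts)
  | param (i : ℕ) : STWf rankΓ rankΔ rankQ (.node (.param i) [])

/-- A tree over `Δ ∪ (Q × T_Σ) ∪ Y` is parameter-free if no `y_i` occurs in it. -/
inductive NoParam : ST Γ Δ Q → Prop
  | node {l : SLab Γ Δ Q} {ts : List (ST Γ Δ Q)}
      (hl : ∀ i : ℕ, l ≠ .param i) (h : ∀ t ∈ ts, NoParam t) :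
      NoParam (.node l ts)

/-- A macro tree transducer `M = (Q, Σ, Δ, q₀, R)`.  The alphabets `Γ` (input),
`Δ` (output) and the set `Q` of states are ranked; `q₀` has rank `0`; `rules q σ`
is the (finite) set `R_{q,σ}` of right-hand sides of the `⟨q,σ⟩`-rules, and every
right-hand side is a well-formed tree over `Δ ∪ (Q × X_k) ∪ Y_m`. -/
structure MTT (Γ Δ Q : Type) where
  rankΓ : Γ → ℕ
  rankΔ : Δ → ℕ
  rankQ : Q → ℕ
  q₀ : Q
  q₀_rank : rankQ q₀ = 0
  rules : Q → Γ → Set (Rhs Δ Q)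
  rules_fin : ∀ q σ, (rules q σ).Finite
  rules_wf : ∀ q σ, ∀ r ∈ rules q σ, RhsWf rankΔ rankQ (rankΓ σ) (rankQ q) r

/-- The rule selector of a plain mtt. -/
def MTT.sel (M : MTT Γ Δ Q) : Q → Γ → List (RTree Γ) → Set (Rhs Δ Q) :=
  plainSel M.rules

end MttF

/-! The transducer `M.pair` keeps the states and rules of `M`, renamed into the new alphabets,
adds a copying state `c` with rules `⟨c, σ(x₁,…,x_k)⟩ → σ(⟨c,x₁⟩,…,⟨c,x_k⟩)`, and a new initial
state whose `σ`-rules are `π(σ(⟨c,x₁⟩,…,⟨c,x_k⟩), r)` for the right-hand sides `r` of the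
`⟨q₀,σ⟩`-rules of `M`. On a well-formed input `s` the copying state produces exactly `s`.
Renaming states and output symbols commutes with OI derivations in both directions (every
renamed derivation only ever uses renamed rules), so the second component of `π` ranges
exactly over the OI outputs of `M` on `s`. -/

namespace MttF

namespace RTree

variable {α β γ : Type}

@[induction_eliminator]
theorem induction {motive : RTree α → Prop}
    (node : ∀ a ts, (∀ t ∈ ts, motive t) → motive (node a ts)) (t : RTree α) : motive t :=
  match t with
  | .node a ts => node a ts fun t _ => induction node t

@[simp]
theorem map_node (f : α → β) (a : α) (ts : List (RTree α)) :
    (node a ts).map f = node (f a) (ts.map (map f)) := by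
  rw [map, List.map_attach_eq_pmap, List.pmap_eq_map]

theorem map_map (f : α → β) (g : β → γ) (t : RTree α) :
    (t.map f).map g = t.map (g ∘ f) := by
  induction t with
  | node a ts ih => simpa using List.map_congr_left ih

theorem map_injective {f : α → β} (hf : Function.Injective f) :
    Function.Injective (map f) := by
  intro t
  induction t with
  | node a ts ih =>
    rintro ⟨b, us⟩ h
    simp only [map_node, node.injEq] at h
    obtain ⟨hab, hts⟩ := h
    have hlen : ts.length = us.length := by simpa using congrArg List.length hts
    rw [hf hab, List.ext_getElem hlen fun i h₁ h₂ =>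
      ih _ (List.getElem_mem h₁) (by simpa [h₁, h₂] using congrArg (·[i]?) hts)]

theorem wf_node_iff {rk : α → ℕ} {a : α} {ts : List (RTree α)} :
    (node a ts).Wf rk ↔ ts.length = rk a ∧ ∀ t ∈ ts, t.Wf rk :=
  ⟨fun ⟨hlen, hts⟩ => ⟨hlen, hts⟩, fun ⟨hlen, hts⟩ => .node hlen hts⟩

theorem wf_map_iff {f : α → β} {rk : α → ℕ} {rk' : β → ℕ}
    (hrk : ∀ a, rk' (f a) = rk a) {t : RTree α} : (t.map f).Wf rk' ↔ t.Wf rk := by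
  induction t with
  | node a ts ih => simp +contextual [wf_node_iff, hrk, ih]

end RTree

theorem forall₂_iff_forall_fin {α β : Type} {R : α → β → Prop} {l₁ : List α}
    {l₂ : List β} :
    List.Forall₂ R l₁ l₂ ↔ ∃ hlen : l₂.length = l₁.length,
      ∀ i : Fin l₁.length, R (l₁.get i) (l₂.get (i.cast hlen.symm)) := by
  rw [List.forall₂_iff_get]
  exact ⟨fun ⟨h, hR⟩ => ⟨h.symm, fun i => hR i i.2 (h ▸ i.2)⟩,
    fun ⟨h, hR⟩ => ⟨h.symm, fun i h₁ _ => hR ⟨i, h₁⟩⟩⟩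

theorem forall₂_exists_map_iff {α β γ : Type} {R : α → β → Prop} {F : β → γ}
    {l₁ : List α} {l₂ : List γ} :
    List.Forall₂ (fun a c => ∃ b, R a b ∧ c = F b) l₁ l₂ ↔
      ∃ l, List.Forall₂ R l₁ l ∧ l₂ = l.map F := by
  constructor
  · intro h
    induction h with
    | nil => exact ⟨[], .nil, rfl⟩
    | cons hab _ ih =>
      obtain ⟨b, hb, rfl⟩ := hab
      obtain ⟨l, hl, rfl⟩ := ih
      exact ⟨b :: l, .cons hb hl, rfl⟩
  · rintro ⟨l, hl, rfl⟩
    rw [List.forall₂_map_right_iff]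
    exact hl.imp fun a b h => ⟨b, h, rfl⟩

theorem forall₂_iff_eq_map {α β : Type} {R : α → β → Prop} {F : α → β}
    {l₁ : List α} (h : ∀ a ∈ l₁, ∀ b, R a b ↔ b = F a) {l₂ : List β} :
    List.Forall₂ R l₁ l₂ ↔ l₂ = l₁.map F := by
  induction l₁ generalizing l₂ with
  | nil => simp
  | cons a l ih =>
    cases l₂ with
    | nil => simp
    | cons b l₂ =>
      simp only [List.forall₂_cons, List.map_cons, List.cons.injEq]
      rw [h a (by simp), ih fun a' ha' => h a' (by simp [ha'])]

section Semantics

variable {Γ Δ Q : Type} {rsel : Q → Γ → List (RTree Γ) → Set (Rhs Δ Q)}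

@[simp]
theorem embed_node (d : Δ) (ts : List (RTree Δ)) :
    embed (.node d ts) = .node (.out d) (ts.map embed) :=
  RTree.map_node _ _ _

theorem OISub.eq_of_nil :
    ∀ {us : List (ST Γ Δ Q)} {t₀ t : OT Δ}, OISub rsel us t₀ t → us = [] → t = t₀
  | _, _, _, .param hi _, rfl => absurd hi (Nat.not_lt_zero _)
  | _, _, _, .out hlen h, hus => by
      rw [List.ext_get hlen fun n h₁ h₂ => OISub.eq_of_nil (h ⟨n, h₂⟩) hus]

theorem OISub.embed_refl (us : List (ST Γ Δ Q)) (t : RTree Δ) :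
    OISub rsel us (embed t) (embed t) := by
  induction t with
  | node d ts ih =>
    rw [embed_node]
    exact .out rfl fun i => by simpa using ih _ (List.getElem_mem (by simpa using i.2))

theorem semOI_out_iff {d : Δ} {us : List (ST Γ Δ Q)} {t : OT Δ} :
    SemOI rsel (.node (.out d) us) t ↔
      ∃ ts, List.Forall₂ (SemOI rsel) us ts ∧ t = .node (.out d) ts := by
  constructor
  · rintro (_ | ⟨hlen, h⟩)
    exact ⟨_, forall₂_iff_forall_fin.2 ⟨hlen, h⟩, rfl⟩
  · rintro ⟨ts, hts, rfl⟩
    obtain ⟨hlen, h⟩ := forall₂_iff_forall_fin.1 hts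
    exact .out hlen h

theorem semOI_out_embed_iff {d : Δ} {us : List (ST Γ Δ Q)} {w : RTree Δ} :
    SemOI rsel (.node (.out d) us) (embed w) ↔
      ∃ ws, List.Forall₂ (fun u w => SemOI rsel u (embed w)) us ws ∧ w = .node d ws := by
  obtain ⟨d', ws⟩ := w
  simp [semOI_out_iff, List.forall₂_map_right_iff]

theorem semOI_call_nil_embed_iff {q : Q} {σ : Γ} {ss : List (RTree Γ)} {w : RTree Δ} :
    SemOI rsel (.node (.call q (.node σ ss)) []) (embed w) ↔
      ∃ r ∈ rsel q σ ss, SemOI rsel (substX ss r) (embed w) := by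
  constructor
  · rintro (_ | _ | ⟨hr, h₀, hs⟩)
    rw [hs.eq_of_nil rfl]
    exact ⟨_, hr, h₀⟩
  · rintro ⟨r, hr, h⟩
    exact .call hr h (OISub.embed_refl _ _)

end Semantics

section Relabel
variable {Γ Δ Q Δ' Q' : Type}

def OLab.map (f : Δ → Δ') : OLab Δ → OLab Δ'
  | .out d => .out (f d)
  | .param i => .param i

def RLab.map (f : Δ → Δ') (g : Q → Q') : RLab Δ Q → RLab Δ' Q'
  | .out d => .out (f d)
  | .call q x => .call (g q) x
  | .param i => .param i

def SLab.map (f : Δ → Δ') (g : Q → Q') : SLab Γ Δ Q → SLab Γ Δ' Q'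
  | .out d => .out (f d)
  | .call q s => .call (g q) s
  | .param i => .param i

theorem RLab.subst_map (f : Δ → Δ') (g : Q → Q') (ss : List (RTree Γ)) (l : RLab Δ Q) :
    (l.map f g).subst ss = (l.subst ss).map f g := by
  cases l with
  | call q x => cases h : ss[x]? <;> simp [RLab.map, RLab.subst, SLab.map, h]
  | _ => rfl

theorem substX_map (f : Δ → Δ') (g : Q → Q') (ss : List (RTree Γ)) (r : Rhs Δ Q) :
    substX ss (r.map (RLab.map f g)) = (substX ss r).map (SLab.map f g) := by
  simp only [substX, RTree.map_map]
  congr 1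
  funext l
  exact RLab.subst_map f g ss l

theorem embed_map (f : Δ → Δ') (t : RTree Δ) :
    (embed t).map (OLab.map f) = embed (t.map f) := by
  simp only [embed, RTree.map_map]
  rfl

variable {rsel : Q → Γ → List (RTree Γ) → Set (Rhs Δ Q)}
  {rsel' : Q' → Γ → List (RTree Γ) → Set (Rhs Δ' Q')} {f : Δ → Δ'} {g : Q → Q'}

mutual
theorem SemOI.map
    (hsel : ∀ q σ ss, ∀ r ∈ rsel q σ ss, r.map (RLab.map f g) ∈ rsel' (g q) σ ss) :
    ∀ {u t}, SemOI rsel u t → SemOI rsel' (u.map (SLab.map f g)) (t.map (OLab.map f))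
  | _, _, .param i => by simpa [SLab.map, OLab.map] using SemOI.param i
  | _, _, .out hlen h => by
      simp only [RTree.map_node]
      exact .out (by simpa using hlen) fun i => by
        simpa using SemOI.map hsel (h (i.cast (by simp)))
  | _, _, .call hr h₀ hs => by
      simp only [RTree.map_node]
      exact .call (hsel _ _ _ _ hr) (by rw [substX_map]; exact SemOI.map hsel h₀)
        (OISub.map hsel hs)

theorem OISub.map
    (hsel : ∀ q σ ss, ∀ r ∈ rsel q σ ss, r.map (RLab.map f g) ∈ rsel' (g q) σ ss) :
    ∀ {us t₀ t}, OISub rsel us t₀ t →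
      OISub rsel' (us.map (RTree.map (SLab.map f g))) (t₀.map (OLab.map f)) (t.map (OLab.map f))
  | _, _, _, .param hi h => by
      simp only [RTree.map_node, OLab.map, List.map_nil]
      exact .param (by simpa using hi) (by simpa using SemOI.map hsel h)
  | _, _, _, .out hlen h => by
      simp only [RTree.map_node]
      exact .out (by simpa using hlen) fun i => by
        simpa using OISub.map hsel (h (i.cast (by simp)))
end

mutual
theorem SemOI.of_map
    (hsel : ∀ q σ ss, ∀ r' ∈ rsel' (g q) σ ss,
      ∃ r ∈ rsel q σ ss, r' = r.map (RLab.map f g)) :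
    ∀ {u' t'}, SemOI rsel' u' t' → ∀ u : ST Γ Δ Q, u' = u.map (SLab.map f g) →
      ∃ t, SemOI rsel u t ∧ t' = t.map (OLab.map f)
  | _, _, .param i, ⟨l, us⟩, hu => by
      cases l <;> simp [SLab.map] at hu
      obtain ⟨rfl, rfl⟩ := hu
      exact ⟨_, .param i, by simp [OLab.map]⟩
  | _, _, .out (us := us') (ts := ts') hlen h, ⟨l, us⟩, hu => by
      have ih := fun i => SemOI.of_map hsel (h i)
      cases l <;> simp [SLab.map] at hu
      obtain ⟨rfl, rfl⟩ := hu
      have hchildren : List.Forall₂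
          (fun u t' => ∃ t, SemOI rsel u t ∧ t' = t.map (OLab.map f)) us ts' := by
        refine forall₂_iff_forall_fin.2 ⟨by simpa using hlen, fun i => ?_⟩
        simpa using ih (i.cast (by simp)) _ (by simp)
      obtain ⟨ts, hts, rfl⟩ := forall₂_exists_map_iff.1 hchildren
      obtain ⟨hlen, hts⟩ := forall₂_iff_forall_fin.1 hts
      exact ⟨_, .out hlen hts, by simp [OLab.map]⟩
  | _, _, .call hr' h₀' hs', ⟨l, us⟩, hu => by
      have ih₀ := SemOI.of_map hsel h₀'
      have ihs := OISub.of_map hsel hs'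
      cases l <;> simp [SLab.map] at hu
      obtain ⟨⟨rfl, rfl⟩, rfl⟩ := hu
      obtain ⟨r, hr, rfl⟩ := hsel _ _ _ _ hr'
      obtain ⟨t₀, h₀, rfl⟩ := ih₀ _ (substX_map f g _ r)
      obtain ⟨t, hs, rfl⟩ := ihs _ _ rfl rfl
      exact ⟨t, .call hr h₀ hs, rfl⟩

theorem OISub.of_map
    (hsel : ∀ q σ ss, ∀ r' ∈ rsel' (g q) σ ss,
      ∃ r ∈ rsel q σ ss, r' = r.map (RLab.map f g)) :
    ∀ {us' t₀' t'}, OISub rsel' us' t₀' t' → ∀ (us : List (ST Γ Δ Q)) (t₀ : OT Δ),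
      us' = us.map (RTree.map (SLab.map f g)) → t₀' = t₀.map (OLab.map f) →
      ∃ t, OISub rsel us t₀ t ∧ t' = t.map (OLab.map f)
  | _, _, _, .param (i := i) hi h, us, ⟨l, ts₀⟩, hus, ht₀ => by
      have ih := SemOI.of_map hsel h
      cases l <;> simp [OLab.map] at ht₀
      obtain ⟨rfl, rfl⟩ := ht₀
      subst hus
      obtain ⟨t, ht, rfl⟩ := ih (us[i]'(by simpa using hi)) (by simp)
      exact ⟨t, .param (by simpa using hi) (by simpa using ht), rfl⟩
  | _, _, _, .out (ts' := ts') hlen h, us, ⟨l, ts₀⟩, hus, ht₀ => by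
      have ih := fun i => OISub.of_map hsel (h i)
      cases l <;> simp [OLab.map] at ht₀
      obtain ⟨rfl, rfl⟩ := ht₀
      have hchildren : List.Forall₂
          (fun t₀ t' => ∃ t, OISub rsel us t₀ t ∧ t' = t.map (OLab.map f)) ts₀ ts' := by
        refine forall₂_iff_forall_fin.2 ⟨by simpa using hlen, fun i => ?_⟩
        simpa using ih (i.cast (by simp)) us _ hus (by simp)
      obtain ⟨ts, hts, rfl⟩ := forall₂_exists_map_iff.1 hchildren
      obtain ⟨hlen, hts⟩ := forall₂_iff_forall_fin.1 hts
      exact ⟨_, .out hlen hts, by simp [OLab.map]⟩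
end

theorem semOI_map_iff
    (hsel : ∀ q σ ss, rsel' (g q) σ ss = RTree.map (RLab.map f g) '' rsel q σ ss)
    {u : ST Γ Δ Q} {t' : OT Δ'} :
    SemOI rsel' (u.map (SLab.map f g)) t' ↔
      ∃ t, SemOI rsel u t ∧ t' = t.map (OLab.map f) := by
  constructor
  · intro h
    refine SemOI.of_map (fun q σ ss r' hr' => ?_) h u rfl
    rw [hsel] at hr'
    obtain ⟨r, hr, rfl⟩ := hr'
    exact ⟨r, hr, rfl⟩
  · rintro ⟨t, ht, rfl⟩
    exact SemOI.map (fun q σ ss r hr => hsel q σ ss ▸ Set.mem_image_of_mem _ hr) ht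

theorem map_eq_embed_iff {f : Δ → Δ'} {t : OT Δ} {w : RTree Δ'} :
    t.map (OLab.map f) = embed w ↔ ∃ t₁, t = embed t₁ ∧ w = t₁.map f := by
  constructor
  · induction t using RTree.induction generalizing w with
    | node l ts ih =>
      obtain ⟨d, ws⟩ := w
      cases l with
      | param i => simp [embed, OLab.map]
      | out d₀ =>
        simp only [embed, RTree.map_node, OLab.map, RTree.node.injEq, OLab.out.injEq]
        rintro ⟨rfl, hts⟩
        have hrel : List.Forall₂ (· = ·) (ts.map (RTree.map (OLab.map f))) (ws.map embed) :=
          hts ▸ List.forall₂_refl _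
        simp only [List.forall₂_map_left_iff, List.forall₂_map_right_iff] at hrel
        obtain ⟨ts₁, hts₁, rfl⟩ := forall₂_exists_map_iff.1
          (((List.forall₂_and_left _ _).2 ⟨ih, hrel⟩).imp fun _ _ h => h.1 h.2)
        have : ts = ts₁.map embed := by
          rw [← List.forall₂_eq_eq_eq, List.forall₂_map_right_iff]
          exact hts₁
        exact ⟨.node d₀ ts₁, by simp [this, embed], by simp⟩
  · rintro ⟨t₁, rfl, rfl⟩
    exact embed_map f t₁

theorem semOI_map_embed_iff
    (hsel : ∀ q σ ss, rsel' (g q) σ ss = RTree.map (RLab.map f g) '' rsel q σ ss)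
    {u : ST Γ Δ Q} {w : RTree Δ'} :
    SemOI rsel' (u.map (SLab.map f g)) (embed w) ↔
      ∃ t, SemOI rsel u (embed t) ∧ w = t.map f := by
  rw [semOI_map_iff hsel]
  constructor
  · rintro ⟨t, ht, hw⟩
    obtain ⟨t₁, rfl, rfl⟩ := map_eq_embed_iff.1 hw.symm
    exact ⟨t₁, ht, rfl⟩
  · rintro ⟨t, ht, rfl⟩
    exact ⟨_, ht, (embed_map f t).symm⟩

theorem RhsWf.map {rkΔ : Δ → ℕ} {rkQ : Q → ℕ} {rkΔ' : Δ' → ℕ} {rkQ' : Q' → ℕ}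
    (hf : ∀ d, rkΔ' (f d) = rkΔ d) (hg : ∀ q, rkQ' (g q) = rkQ q) {k m : ℕ} {r : Rhs Δ Q}
    (h : RhsWf rkΔ rkQ k m r) : RhsWf rkΔ' rkQ' k m (r.map (RLab.map f g)) := by
  induction h with
  | out hlen _ ih =>
    simp only [RTree.map_node, RLab.map]
    exact .out (by simpa [hf]) (by simpa using ih)
  | call hx hlen _ ih =>
    simp only [RTree.map_node, RLab.map]
    exact .call hx (by simpa [hg]) (by simpa using ih)
  | param hi => simpa [RLab.map] using .param hi

end Relabel

section Copy

variable {Γ Δ Q : Type}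

def copyRhs (c : Q) (a : Δ) (k : ℕ) : Rhs Δ Q :=
  .node (.out a) ((List.range k).map fun i => .node (.call c i) [])

theorem rhsWf_copyRhs {rkΔ : Δ → ℕ} {rkQ : Q → ℕ} {c : Q} {a : Δ} {k m : ℕ}
    (ha : rkΔ a = k) (hc : rkQ c = 0) : RhsWf rkΔ rkQ k m (copyRhs c a k) :=
  .out (by simp [ha]) (by simpa using fun i hi => .call hi hc.symm (by simp))

@[simp]
theorem substX_node (ss : List (RTree Γ)) (l : RLab Δ Q) (rs : List (Rhs Δ Q)) :
    substX ss (.node l rs) = .node (l.subst ss) (rs.map (substX ss)) :=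
  RTree.map_node _ _ _

theorem substX_copyRhs (c : Q) (a : Δ) (ss : List (RTree Γ)) :
    substX ss (copyRhs c a ss.length) = .node (.out a) (ss.map fun s => .node (.call c s) []) := by
  simp only [copyRhs, substX_node, List.map_map]
  congr 1
  refine List.ext_getElem (by simp) fun i h₁ h₂ => ?_
  simp [RLab.subst, List.getElem?_eq_getElem (by simpa using h₁ : i < ss.length)]

theorem semOI_copy_iff {rsel : Q → Γ → List (RTree Γ) → Set (Rhs Δ Q)} {rk : Γ → ℕ}
    {e : Γ → Δ} {c : Q} (hc : ∀ σ ss, rsel c σ ss = {copyRhs c (e σ) (rk σ)})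
    {s : RTree Γ} (hs : s.Wf rk) {w : RTree Δ} :
    SemOI rsel (.node (.call c s) []) (embed w) ↔ w = s.map e := by
  induction hs generalizing w with
  | @node σ ss hlen _ ih =>
    rw [semOI_call_nil_embed_iff, hc, ← hlen]
    simp only [Set.mem_singleton_iff, exists_eq_left, substX_copyRhs, semOI_out_embed_iff,
      List.forall₂_map_left_iff, forall₂_iff_eq_map fun s hs _ => ih s hs, RTree.map_node]

end Copy

section Pairing

variable {Γ Δ Q : Type}

def pairing (s : RTree Γ) (t : RTree Δ) : RTree (Γ ⊕ Δ ⊕ Unit) :=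
  .node (.inr (.inr ())) [s.map .inl, t.map fun d => .inr (.inl d)]

theorem pairing_inj {s s' : RTree Γ} {t t' : RTree Δ} :
    pairing s t = pairing s' t' ↔ s = s' ∧ t = t' := by
  simp [pairing, (RTree.map_injective Sum.inl_injective).eq_iff,
    (RTree.map_injective fun a b h => Sum.inl_injective (Sum.inr_injective h)).eq_iff]

theorem wf_pairing_iff {rkΓ : Γ → ℕ} {rkΔ : Δ → ℕ} {s : RTree Γ} {t : RTree Δ} :
    (pairing s t).Wf (Sum.elim rkΓ (Sum.elim rkΔ fun _ => 2)) ↔ s.Wf rkΓ ∧ t.Wf rkΔ := by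
  simp [pairing, RTree.wf_node_iff, RTree.wf_map_iff]

/-- States `inl q` run `M`, `inr true` copies the input, and the initial state `inr false`
produces `π(copy of the input, output of M)`. -/
def MTT.pair (M : MTT Γ Δ Q) : MTT Γ (Γ ⊕ Δ ⊕ Unit) (Q ⊕ Bool) where
  rankΓ := M.rankΓ
  rankΔ := Sum.elim M.rankΓ (Sum.elim M.rankΔ fun _ => 2)
  rankQ := Sum.elim M.rankQ fun _ => 0
  q₀ := .inr false
  q₀_rank := rfl
  rules
    | .inl q, σ => RTree.map (RLab.map (fun d => .inr (.inl d)) .inl) '' M.rules q σ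
    | .inr true, σ => {copyRhs (.inr true) (.inl σ) (M.rankΓ σ)}
    | .inr false, σ =>
      (fun r => .node (.out (.inr (.inr ())))
        [copyRhs (.inr true) (.inl σ) (M.rankΓ σ),
          r.map (RLab.map (fun d => .inr (.inl d)) .inl)])
        '' M.rules M.q₀ σ
  rules_fin
    | .inl q, σ => (M.rules_fin q σ).image _
    | .inr true, _ => Set.finite_singleton _
    | .inr false, σ => (M.rules_fin M.q₀ σ).image _
  rules_wf
    | .inl q, σ => by
      rintro _ ⟨r, hr, rfl⟩
      exact RhsWf.map (f := fun d => (.inr (.inl d) : Γ ⊕ Δ ⊕ Unit))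
        (g := (Sum.inl : Q → Q ⊕ Bool)) (fun _ => rfl) (fun _ => rfl) (M.rules_wf q σ r hr)
    | .inr true, σ => by
      rintro _ rfl
      exact rhsWf_copyRhs rfl rfl
    | .inr false, σ => by
      rintro _ ⟨r, hr, rfl⟩
      refine .out rfl ?_
      simp only [List.mem_cons, List.not_mem_nil, or_false, forall_eq_or_imp, forall_eq]
      have hr := M.rules_wf _ σ r hr
      rw [M.q₀_rank] at hr
      exact ⟨rhsWf_copyRhs rfl rfl, RhsWf.map (f := fun d => (.inr (.inl d) : Γ ⊕ Δ ⊕ Unit))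
        (g := (Sum.inl : Q → Q ⊕ Bool)) (fun _ => rfl) (fun _ => rfl) hr⟩

variable (M : MTT Γ Δ Q)

theorem MTT.semOI_pair_copy_iff {s : RTree Γ} (hs : s.Wf M.rankΓ)
    {w : RTree (Γ ⊕ Δ ⊕ Unit)} :
    SemOI M.pair.sel (.node (.call (.inr true) s) []) (embed w) ↔ w = s.map .inl :=
  semOI_copy_iff (fun _ _ => rfl) hs

theorem MTT.semOI_pair_sim_iff {u : ST Γ Δ Q} {w : RTree (Γ ⊕ Δ ⊕ Unit)} :
    SemOI M.pair.sel (u.map (SLab.map (fun d => .inr (.inl d)) .inl)) (embed w) ↔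
      ∃ t, SemOI M.sel u (embed t) ∧ w = t.map fun d => .inr (.inl d) :=
  semOI_map_embed_iff fun _ _ _ => rfl

theorem MTT.pair_sel_init (σ : Γ) (ss : List (RTree Γ)) :
    M.pair.sel M.pair.q₀ σ ss =
      (fun r => .node (.out (.inr (.inr ()))) [copyRhs (.inr true) (.inl σ) (M.rankΓ σ),
        r.map (RLab.map (fun d => .inr (.inl d)) Sum.inl)]) '' M.sel M.q₀ σ ss :=
  rfl

theorem MTT.semOI_pair_init_iff {s : RTree Γ} (hs : s.Wf M.rankΓ)
    {w : RTree (Γ ⊕ Δ ⊕ Unit)} :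
    SemOI M.pair.sel (.node (.call M.pair.q₀ s) []) (embed w) ↔
      ∃ t, SemOI M.sel (.node (.call M.q₀ s) []) (embed t) ∧ w = pairing s t := by
  obtain ⟨σ, ss⟩ := s
  have hcopy : ∀ w, SemOI M.pair.sel (substX ss (copyRhs (.inr true) (.inl σ) (M.rankΓ σ)))
      (embed w) ↔ w = (RTree.node σ ss).map .inl := fun w => by
    rw [← M.semOI_pair_copy_iff hs, semOI_call_nil_embed_iff]
    exact ⟨fun h => ⟨_, rfl, h⟩, fun ⟨_, rfl, h⟩ => h⟩
  simp only [semOI_call_nil_embed_iff, MTT.pair_sel_init, Set.exists_mem_image, substX_node,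
    RLab.subst, List.map_cons, List.map_nil, semOI_out_embed_iff, List.forall₂_cons_left_iff,
    List.forall₂_nil_left_iff, hcopy, substX_map, M.semOI_pair_sim_iff]
  constructor
  · rintro ⟨r, hr, _, ⟨_, _, rfl, ⟨_, _, ⟨t, ht, rfl⟩, rfl, rfl⟩, rfl⟩, rfl⟩
    exact ⟨t, ⟨r, hr, ht⟩, rfl⟩
  · rintro ⟨t, ⟨r, hr, ht⟩, rfl⟩
    exact ⟨r, hr, _, ⟨_, _, rfl, ⟨_, _, ⟨t, ht, rfl⟩, rfl, rfl⟩, rfl⟩, rfl⟩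

theorem MTT.tauOI_pair :
    tauOI M.pair.rankΓ M.pair.rankΔ M.pair.sel M.pair.q₀ =
      {p | ∃ s t, (s, t) ∈ tauOI M.rankΓ M.rankΔ M.sel M.q₀ ∧ p = (s, pairing s t)} := by
  ext ⟨s, w⟩
  simp only [tauOI, Set.mem_ofPred_eq, Prod.mk.injEq]
  constructor
  · rintro ⟨hs, hw, hsem⟩
    obtain ⟨t, ht, rfl⟩ := (M.semOI_pair_init_iff hs).1 hsem
    exact ⟨s, t, ⟨hs, (wf_pairing_iff.1 hw).2, ht⟩, rfl, rfl⟩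
  · rintro ⟨s, t, ⟨hs, ht, hsem⟩, rfl, rfl⟩
    exact ⟨hs, wf_pairing_iff.2 ⟨hs, ht⟩, (M.semOI_pair_init_iff hs).2 ⟨t, hsem, rfl⟩⟩

end Pairing

/-- Let `M = (Q,Σ,Δ,q0,R)` be an mtt with `Σ` and `Δ` disjoint, and
let `π` be a binary symbol not in `Σ ∪ Δ` (here the combined output alphabet is
the disjoint sum `Σ ⊕ Δ ⊕ {π}`, so disjointness is automatic).  Then there
exists an mtt `M'` with input alphabet `Σ` and output alphabet `Σ ∪ Δ ∪ {π}`
such that `τ_{OI,M'} = {(s, π(s,t)) | (s,t) ∈ τ_{OI,M}}`.  Consequently, for all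
`s ∈ T_Σ` and `t ∈ T_Δ`: `(s,t) ∈ τ_{OI,M}` iff `π(s,t) ∈ range(τ_{OI,M'})`. -/
theorem exists_mtt_pairing_input_with_output {Γ Δ Q : Type}
    [Fintype Γ] [Fintype Δ] [Fintype Q] (M : MTT Γ Δ Q) :
    ∃ (Q' : Type) (_ : Fintype Q') (M' : MTT Γ (Γ ⊕ Δ ⊕ Unit) Q'),
      M'.rankΓ = M.rankΓ ∧
      M'.rankΔ = Sum.elim M.rankΓ (Sum.elim M.rankΔ (fun _ => 2)) ∧
      tauOI M'.rankΓ M'.rankΔ M'.sel M'.q₀ =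
        {p | ∃ s t, (s, t) ∈ tauOI M.rankΓ M.rankΔ M.sel M.q₀ ∧
          p = (s, .node (Sum.inr (Sum.inr ()))
                  [s.map Sum.inl, t.map (fun d => Sum.inr (Sum.inl d))])} ∧
      ∀ (s : RTree Γ) (t : RTree Δ),
        ((s, t) ∈ tauOI M.rankΓ M.rankΔ M.sel M.q₀ ↔
          (RTree.node (Sum.inr (Sum.inr ()))
              [s.map Sum.inl, t.map (fun d => Sum.inr (Sum.inl d))]) ∈
            Prod.snd '' (tauOI M'.rankΓ M'.rankΔ M'.sel M'.q₀)) := by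
  refine ⟨Q ⊕ Bool, inferInstance, M.pair, rfl, rfl, M.tauOI_pair, fun s t => ?_⟩
  rw [M.tauOI_pair]
  constructor
  · intro h
    exact ⟨_, ⟨s, t, h, rfl⟩, rfl⟩
  · rintro ⟨_, ⟨s', t', h, rfl⟩, hst⟩
    obtain ⟨rfl, rfl⟩ := pairing_inj.1 hst
    exact h

end MttF
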